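/- Let n ≥ 4 and let G = Z/n act diagonally on P^{n−1} × S, where S ⊂ P³ is the Fermat surface of degree n with the weight-(0,0,1,1) action and the action on P^{n−1} has weights (0,1,…,n−1). Then X = (P^{n−1} × S)/G has only terminal singularities: for every nontrivial g ∈ G and every fixed point x of g, the age of g at x, defined as the sum of the fractional parts r_i ∈ [0,1) with eigenvalues e^{2πi r_i} of g on the tangent space T_x, is strictly greater than 1. -/

import Mathlib

open AlgebraicGeometry CategoryTheory Limits

universe u

namespace RCDeg

/-- `Spec k` of a field, as a scheme. -/
noncomputable abbrev specF (k : Type u) [Field k] : Scheme.{u} :=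
  Spec (CommRingCat.of k)

/-- The morphism `Spec K ⟶ Spec k` induced by a field extension `k ⊆ K`. -/
noncomputable def specExt (k K : Type u) [Field k] [Field K] [Algebra k K] :
    specF K ⟶ specF k :=
  Spec.map (CommRingCat.ofHom (algebraMap k K))

/-- A prime (Weil) divisor on a scheme `X`: an irreducible closed subset of
codimension one (encoded via topological Krull dimension). -/
structure PrimeDivisor (X : Scheme.{u}) : Type u where
  carrier : Set X
  isClosed : IsClosed carrier
  isIrreducible : IsIrreducible carrier
  codimOne : topologicalKrullDim carrier + 1 = topologicalKrullDim X

/-- A `ℚ`-Weil divisor on `X`: a finitely supported `ℚ`-linear combination of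
prime divisors. -/
abbrev QDiv (X : Scheme.{u}) : Type u := PrimeDivisor X →₀ ℚ

/-- A `ℚ`-divisor is effective if all its coefficients are nonnegative. -/
def QDiv.Effective {X : Scheme.{u}} (A : QDiv X) : Prop := ∀ D, 0 ≤ A D

/-- An irreducible (complete) curve on `W`: a one-dimensional irreducible closed subset. -/
def IsCurve {W : Scheme.{u}} (C : Set W) : Prop :=
  IsClosed C ∧ IsIrreducible C ∧ topologicalKrullDim C = 1

/-- Two points of a scheme `W` are connected by an irreducible rational curve
defined over the field `K`: there is an integral one-dimensional closed subscheme
whose function field is a rational function field over `K`, containing both. -/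
def RCConnects (K : Type u) [Field K] (W : Scheme.{u}) (x y : W) : Prop :=
  ∃ (Z : Scheme.{u}) (ι : Z ⟶ W), IsClosedImmersion ι ∧ IsIntegral Z ∧
    topologicalKrullDim Z = 1 ∧
    (∃ h : IrreducibleSpace Z, Nonempty ((@Scheme.functionField Z h) ≃+* RatFunc K)) ∧
    x ∈ Set.range ι.base ∧ y ∈ Set.range ι.base

/-- Two points are connected by a chain of rational curves over `K`. -/
def RCChainConnects (K : Type u) [Field K] (W : Scheme.{u}) : W → W → Prop :=
  Relation.ReflTransGen (RCConnects K W)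

/-- `X/k` is rationally connected: over any uncountable algebraically closed
extension `K` of `k`, any two `K`-points of `X` are connected by an irreducible
rational curve defined over `K`. -/
def RationallyConnected (k : Type u) [Field k] {X : Scheme.{u}} (f : X ⟶ specF k) : Prop :=
  ∀ (K : Type u) [Field K] [Algebra k K], IsAlgClosed K → ¬ Countable K →
    ∀ p q : specF K ⟶ pullback f (specExt k K),
      p ≫ pullback.snd f (specExt k K) = 𝟙 _ →
      q ≫ pullback.snd f (specExt k K) = 𝟙 _ →
      ∀ a b, a ∈ Set.range p.base → b ∈ Set.range q.base →
        RCConnects K (pullback f (specExt k K)) a b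

/-- `X/k` is rationally chain connected: over any uncountable algebraically closed
extension `K` of `k`, any two `K`-points are connected by a chain of rational curves. -/
def RationallyChainConnected (k : Type u) [Field k] {X : Scheme.{u}} (f : X ⟶ specF k) : Prop :=
  ∀ (K : Type u) [Field K] [Algebra k K], IsAlgClosed K → ¬ Countable K →
    ∀ p q : specF K ⟶ pullback f (specExt k K),
      p ≫ pullback.snd f (specExt k K) = 𝟙 _ →
      q ≫ pullback.snd f (specExt k K) = 𝟙 _ →
      ∀ a b, a ∈ Set.range p.base → b ∈ Set.range q.base →
        RCChainConnects K (pullback f (specExt k K)) a b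

/-- `X/k` is geometrically irreducible. -/
def GeometricallyIrreducible (k : Type u) [Field k] {X : Scheme.{u}} (f : X ⟶ specF k) : Prop :=
  IrreducibleSpace ((pullback f (specExt k (AlgebraicClosure k)) : Scheme.{u}) : Type u)

/-- `X/k` is geometrically connected. -/
def GeometricallyConnected (k : Type u) [Field k] {X : Scheme.{u}} (f : X ⟶ specF k) : Prop :=
  ConnectedSpace ((pullback f (specExt k (AlgebraicClosure k)) : Scheme.{u}) : Type u)

/-- `X/k` has a `k`-rational point (a section of the structure morphism). -/
def HasRationalPoint (k : Type u) [Field k] {X : Scheme.{u}} (f : X ⟶ specF k) : Prop :=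
  ∃ s : specF k ⟶ X, s ≫ f = 𝟙 (specF k)

/-- `f` is a birational (proper) morphism: it is dominant and restricts to an
isomorphism onto its image over a dense open of the source. -/
def IsBirationalMor {X Y : Scheme.{u}} (f : X ⟶ Y) : Prop :=
  IsDominant f ∧ ∃ U : X.Opens, Dense (U : Set X) ∧ IsOpenImmersion (U.ι ≫ f)

/-- `X` is a normal scheme: integral with integrally closed local rings. -/
def IsNormalScheme (X : Scheme.{u}) : Prop :=
  IsIntegral X ∧ ∀ x : X, IsIntegrallyClosed (X.presheaf.stalk x)

/-- (Proxy.)  A witness that the log pair `(X, Δ)` is Kawamata log terminal: the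
boundary is effective with coefficients `< 1`, and there is a proper birational
resolution together with a discrepancy assignment on prime divisors of the
resolution, all of whose values are `> -1`.  (Discrepancies are recorded as data
since canonical divisors are not available in current Mathlib.) -/
structure KltPairWitness (X : Scheme.{u}) (Δ : QDiv X) : Type (u + 1) where
  effective : Δ.Effective
  coeff_lt_one : ∀ D, Δ D < 1
  Y : Scheme.{u}
  res : Y ⟶ X
  proper : IsProper res
  birational : IsBirationalMor res
  discrepancy : PrimeDivisor Y → ℚ
  discrepancy_gt : ∀ D, -1 < discrepancy D

/-- (Proxy.) The pair `(X, Δ)` is klt. -/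
def IsKltPair (X : Scheme.{u}) (Δ : QDiv X) : Prop := Nonempty (KltPairWitness X Δ)

/-- (Proxy.) `X` has klt singularities (with zero boundary). -/
def IsKlt (X : Scheme.{u}) : Prop := IsKltPair X 0

/-- A closed subset of `X` is a klt subvariety if it underlies a closed subscheme
with klt singularities. -/
def IsKltClosedSubvariety (X : Scheme.{u}) (S : Set X) : Prop :=
  ∃ (Z : Scheme.{u}) (ι : Z ⟶ X), IsClosedImmersion ι ∧ Set.range ι.base = S ∧ IsKlt Z

/-- (Proxy.) A log canonical structure on the pair `(X, Δ)`, recording a resolution,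
discrepancies `≥ -1`, and the collection of log canonical centres. -/
structure LogCanonicalStructure (X : Scheme.{u}) (Δ : QDiv X) : Type (u + 1) where
  effective : Δ.Effective
  coeff_le_one : ∀ D, Δ D ≤ 1
  Y : Scheme.{u}
  res : Y ⟶ X
  proper : IsProper res
  birational : IsBirationalMor res
  discrepancy : PrimeDivisor Y → ℚ
  discrepancy_ge : ∀ D, -1 ≤ discrepancy D
  centres : Set (Set X)
  centres_irr : ∀ S ∈ centres, IsClosed S ∧ IsIrreducible S

/-- A curve contracted by `h` (an `h`-vertical curve). -/
def VerticalCurve {X Y : Scheme.{u}} (h : X ⟶ Y) (C : Set X) : Prop :=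
  IsCurve C ∧ ∃ y : Y, h.base '' C = {y}

/-- (Proxy.) `h` has relative Picard number one, with respect to an (abstract)
intersection pairing `pair` between `ℚ`-divisors and curves: there is a contracted
curve, and a divisor class orthogonal to one contracted curve is orthogonal to all
of them (`N^1(X/Y)` has rank one). -/
def RelPicardNumberOne {X Y : Scheme.{u}} (pair : QDiv X → Set X → ℚ) (h : X ⟶ Y) : Prop :=
  (∃ C, VerticalCurve h C) ∧
    ∀ (A : QDiv X) (C C' : Set X), VerticalCurve h C → VerticalCurve h C' →
      pair A C = 0 → pair A C' = 0

/-- All fibers of `h` are connected. -/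
def ConnectedFibers {X Y : Scheme.{u}} (h : X ⟶ Y) : Prop :=
  ∀ y : Y, _root_.IsPreconnected (h.base ⁻¹' {y})

/-- (Proxy.) Data of a canonical divisor `K` on `X` together with an intersection
pairing of `ℚ`-divisors against curves.  (The identification of `K` with the
canonical class is not expressible in current Mathlib.) -/
structure CanonicalData (X : Scheme.{u}) : Type (u + 1) where
  K : QDiv X
  pair : QDiv X → Set X → ℚ
  pair_add : ∀ A B C, pair (A + B) C = pair A C + pair B C
  pair_smul : ∀ (q : ℚ) A C, pair (q • A) C = q * pair A C

/-- The class `A` is negative on a covering family of curves (with respect to the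
pairing `pair`); this certifies that `A` is not pseudo-effective. -/
def NegativeOnCoveringFamily {X : Scheme.{u}} (pair : QDiv X → Set X → ℚ) (A : QDiv X) : Prop :=
  ∃ U : Set X, Dense U ∧ ∀ x ∈ U, ∃ C : Set X, IsCurve C ∧ x ∈ C ∧ pair A C < 0

/-- (Proxy.) `A` is pseudo-effective with respect to `pair`: it is not negative on
any covering family of curves. -/
def PseudoEffective {X : Scheme.{u}} (pair : QDiv X → Set X → ℚ) (A : QDiv X) : Prop :=
  ¬ NegativeOnCoveringFamily pair A

/-- A prime divisor on `X'` is `π`-exceptional: its image has strictly smaller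
dimension. -/
def ExceptionalDiv {X' X : Scheme.{u}} (π : X' ⟶ X) (D : PrimeDivisor X') : Prop :=
  topologicalKrullDim (π.base '' D.carrier) < topologicalKrullDim D.carrier

/-- (Proxy.) `-A` is `π`-ample: every irreducible curve contracted by `π` lies in
the support of `A` (a consequence of anti-ampleness). -/
def NegRelAmple {X' X : Scheme.{u}} (π : X' ⟶ X) (A : QDiv X') : Prop :=
  ∀ C : Set X', IsCurve C → (∃ x : X, π.base '' C = {x}) →
    ∃ D ∈ A.support, C ⊆ D.carrier

/-- `Z/K` is uniruled: through every point of a dense open subset there passes a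
rational curve defined over `K`. -/
def Uniruled (K : Type u) [Field K] (Z : Scheme.{u}) : Prop :=
  ∃ U : Set Z, IsOpen U ∧ Dense U ∧ ∀ z ∈ U, RCConnects K Z z z

/-- A proper variety `W` over an algebraically closed field `K` is rationally
connected: any two closed points are joined by an irreducible rational curve. -/
def RCVariety (K : Type u) [Field K] (W : Scheme.{u}) : Prop :=
  ∀ x y : W, IsClosed ({x} : Set W) → IsClosed ({y} : Set W) → RCConnects K W x y

/-- The (scheme-theoretic) fiber of `π : X ⟶ C` over a point `c`, as a scheme over
the residue field `κ(c)`. -/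
noncomputable def fiberAt {X C : Scheme.{u}} (π : X ⟶ C) (c : C) : Scheme.{u} :=
  pullback π (C.fromSpecResidueField c)

/-- The structure morphism of the fiber over `c` to `Spec κ(c)`. -/
noncomputable def fiberProj {X C : Scheme.{u}} (π : X ⟶ C) (c : C) :
    fiberAt π c ⟶ specF (C.residueField c) :=
  pullback.snd π (C.fromSpecResidueField c)

/-- The fiber of `π` over `c` contains a closed subvariety, defined over the residue
field `κ(c)`, which is rationally connected. -/
def FiberContainsRCSubvariety {X C : Scheme.{u}} (π : X ⟶ C) (c : C) : Prop :=
  ∃ (Z : Scheme.{u}) (ι : Z ⟶ fiberAt π c), IsClosedImmersion ι ∧ IsIntegral Z ∧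
    RationallyConnected (C.residueField c) (ι ≫ fiberProj π c)

/-- The fiber of `π` over `c` contains a closed subvariety, defined over `κ(c)`,
which is geometrically irreducible and rationally connected. -/
def FiberContainsGeomIrredRCSubvariety {X C : Scheme.{u}} (π : X ⟶ C) (c : C) : Prop :=
  ∃ (Z : Scheme.{u}) (ι : Z ⟶ fiberAt π c), IsClosedImmersion ι ∧ IsIntegral Z ∧
    GeometricallyIrreducible (C.residueField c) (ι ≫ fiberProj π c) ∧
    RationallyConnected (C.residueField c) (ι ≫ fiberProj π c)

/-- `S` is an irreducible component of `T`: a maximal irreducible closed subset. -/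
def IsIrredComponentOf {W : Scheme.{u}} (S T : Set W) : Prop :=
  S ⊆ T ∧ IsIrreducible S ∧ IsClosed S ∧
    ∀ S', S ⊆ S' → S' ⊆ T → IsIrreducible S' → S' = S

/-- (Proxy.) A witness that `X/k` is a log Fano variety: an effective boundary `Δ`
with `(X, Δ)` klt such that `-(K_X + Δ)` is nef and big, positivity being recorded
through an abstract intersection pairing. -/
structure LogFanoWitness (X : Scheme.{u}) : Type (u + 1) where
  Δ : QDiv X
  klt : IsKltPair X Δ
  cd : CanonicalData X
  nef : ∀ C : Set X, IsCurve C → 0 ≤ cd.pair (-(cd.K + Δ)) C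
  big : ∃ E : QDiv X, E.Effective ∧
    ∀ C : Set X, IsCurve C → 0 < cd.pair (-(cd.K + Δ) - E) C

/-- (Proxy.) `X` is a log Fano variety. -/
def IsLogFano (X : Scheme.{u}) : Prop := Nonempty (LogFanoWitness X)

/-- (Proxy.) A Fano fibration: proper surjective with connected fibers and relative
Picard number one, whose anticanonical class is relatively ample (recorded via an
abstract intersection pairing). -/
structure FanoFibrationData {X Y : Scheme.{u}} (h : X ⟶ Y) : Type (u + 1) where
  proper : IsProper h
  surj : Surjective h
  connFibers : ConnectedFibers h
  cd : CanonicalData X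
  relPicOne : RelPicardNumberOne cd.pair h
  antiample : ∀ C : Set X, VerticalCurve h C → cd.pair cd.K C < 0

/-- (Proxy.) A run of the `(K+Δ)`-minimal model program from `(X, Δ)` to `(X', Δ')`:
a birational map, a composition of divisorial contractions and flips, under which
the components of `Δ'` are strict transforms of components of `Δ`. -/
structure MMPRun (X X' : Scheme.{u}) (Δ : QDiv X) (Δ' : QDiv X') : Type (u + 1) where
  map : X.PartialMap X'
  dominant : IsDominant map.hom
  birational : IsBirationalMor map.hom
  transform : ∀ D' ∈ Δ'.support, ∃ D ∈ Δ.support,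
    D'.carrier = closure (map.hom.base '' (map.domain.ι.base ⁻¹' D.carrier))

/-- (Proxy.) `Δ` is a reduced simple normal crossing divisor: all coefficients are
one (on the support) and the components are pairwise distinct irreducible smooth
hypersurfaces meeting transversally (the latter is recorded only through
distinctness of the components). -/
def IsReducedSNC {X : Scheme.{u}} (Δ : QDiv X) : Prop :=
  ∀ D ∈ Δ.support, Δ D = 1

/-- (Proxy, `ℚ`-factoriality.) Every Weil divisor on `X` is locally cut out (up to a
multiple) by a single nonunit of the local ring. -/
def QFactorial (X : Scheme.{u}) : Prop :=
  ∀ D : PrimeDivisor X, ∀ x ∈ D.carrier, ∃ g : X.presheaf.stalk x, ¬ IsUnit g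

end RCDeg


open RCDeg

/-! The tangent weights `j - j₀` (`j ≠ j₀`) on `ℙⁿ⁻¹` run over all nonzero residues mod `n`, so
that factor contributes `∑_{d=1}^{n-1} {a d / n}`. The residues `d = ±1` alone give
`{a/n} + {-a/n} = 1` because `n ∤ a`, and the surface adds `2 {±a/n} > 0`. -/

open Finset

section FractionalParts

variable {k : Type*} [Field k] [LinearOrder k] [IsStrictOrderedRing k] [FloorRing k]

namespace Int

theorem fract_mul_div_eq_of_modEq {N : ℕ} (c : ℤ) {m m' : ℤ} (h : m ≡ m' [ZMOD N]) :
    fract ((c : k) * m / N) = fract ((c : k) * m' / N) := by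
  rcases eq_or_ne N 0 with rfl | hN
  · simp
  obtain ⟨q, hq⟩ := h.symm.dvd
  have hq' : (m : k) - m' = N * q := by exact_mod_cast hq
  rw [fract_eq_fract]
  exact ⟨c * q, by push_cast; field_simp; linear_combination (c : k) * hq'⟩

theorem fract_div_natCast_ne_zero {a N : ℕ} (h : ¬ N ∣ a) (hN : N ≠ 0) :
    fract ((a : k) / N) ≠ 0 := by
  rw [fract_div_natCast_eq_div_natCast_mod]
  have hmod : ((a % N : ℕ) : k) ≠ 0 := by exact_mod_cast mt Nat.dvd_of_mod_eq_zero h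
  exact div_ne_zero hmod (by exact_mod_cast hN)

theorem fract_mul_sign_div_pos {a N : ℕ} (h : ¬ N ∣ a) (hN : N ≠ 0) {s : ℤ}
    (hs : s = 1 ∨ s = -1) : 0 < fract ((a : k) * s / N) := by
  refine (fract_nonneg _).lt_of_ne' ?_
  rcases hs with rfl | rfl
  · simpa using fract_div_natCast_ne_zero h hN
  · simpa [neg_div, fract_neg_eq_zero] using fract_div_natCast_ne_zero h hN

end Int

namespace Fin

theorem intCast_val_sub_modEq {n : ℕ} (j j₀ : Fin n) :
    (((j - j₀ : Fin n) : ℕ) : ℤ) ≡ (j : ℕ) - (j₀ : ℕ) [ZMOD n] := by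
  rw [Fin.val_sub, Int.natCast_mod, Nat.cast_add, Nat.cast_sub j₀.is_lt.le]
  exact (Int.mod_modEq _ _).trans (Int.modEq_iff_dvd.2 ⟨-1, by ring⟩)

theorem sum_fract_mul_sub_div_eq {n : ℕ} [NeZero n] (a : ℕ) (j₀ : Fin n) :
    ∑ j ∈ univ.filter (fun j : Fin n => j ≠ j₀),
        Int.fract ((a : k) * (((j : ℕ) : k) - ((j₀ : ℕ) : k)) / n) =
      ∑ d ∈ univ.filter (fun d : Fin n => d ≠ 0), Int.fract ((a : k) * ((d : ℕ) : k) / n) := by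
  refine sum_equiv (Equiv.subRight j₀) (by simp [sub_eq_zero]) fun j _ => ?_
  have h := Int.fract_mul_div_eq_of_modEq (k := k) a (intCast_val_sub_modEq j j₀)
  push_cast at h
  exact h.symm

theorem one_le_sum_fract_mul_div {n a : ℕ} [NeZero n] (hn : 3 ≤ n) (ha : ¬ n ∣ a) :
    1 ≤ ∑ d ∈ univ.filter (fun d : Fin n => d ≠ 0), Int.fract ((a : k) * ((d : ℕ) : k) / n) := by
  obtain ⟨m, rfl⟩ : ∃ m, n = m + 3 := ⟨n - 3, by omega⟩
  have hval_one : ((1 : Fin (m + 3)) : ℕ) = 1 := Fin.val_one _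
  have hval_neg_one : ((-1 : Fin (m + 3)) : ℕ) = m + 2 := Fin.coe_neg_one
  have hpair : ({1, -1} : Finset (Fin (m + 3))) ⊆ univ.filter (fun d => d ≠ 0) := by
    intro d hd
    rw [mem_filter]
    refine ⟨mem_univ d, Fin.ne_of_val_ne ?_⟩
    simp only [mem_insert, mem_singleton] at hd
    rcases hd with rfl | rfl <;> rw [Fin.val_zero] <;> omega
  have hne : (1 : Fin (m + 3)) ≠ -1 := Fin.ne_of_val_ne (by omega)
  calc (1 : k) = Int.fract ((a : k) / (m + 3 : ℕ)) + Int.fract (-((a : k) / (m + 3 : ℕ))) := by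
        rw [Int.fract_neg (Int.fract_div_natCast_ne_zero ha (by omega))]; ring
    _ = ∑ d ∈ ({1, -1} : Finset (Fin (m + 3))),
          Int.fract ((a : k) * ((d : ℕ) : k) / (m + 3 : ℕ)) := by
        rw [sum_pair hne, hval_one, hval_neg_one, Nat.cast_one, mul_one]
        congr 1
        rw [Int.fract_eq_fract]
        exact ⟨-a, by push_cast; field_simp; ring⟩
    _ ≤ _ := sum_le_sum_of_subset_of_nonneg hpair fun _ _ _ => Int.fract_nonneg _

end Fin

end FractionalParts

/-- (Reid–Tai age computation for Prokhorov's example.)  For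
`n ≥ 4`, consider the diagonal `ℤ/n`-action on `ℙⁿ⁻¹ × S` with weights
`(0,1,…,n-1)` on `ℙⁿ⁻¹` and `(0,0,1,1)` on the Fermat surface `S`.  At a fixed
point of a nontrivial element `a`, the tangent weights are `j - j₀` (`j ≠ j₀`) on
the `ℙⁿ⁻¹`-factor and `s ∈ {1, -1}` (with multiplicity two) on the `S`-factor,
and the age `Σ rᵢ` of the normalized eigenvalue exponents is strictly greater
than `1`, so the quotient has only terminal singularities. -/
theorem prokhorov_example_age_gt_one
    (n : ℕ) (hn : 4 ≤ n) (a : ℕ) (ha0 : 0 < a) (han : a < n)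
    (j₀ : Fin n) (s : ℤ) (hs : s = 1 ∨ s = -1) :
    1 < (∑ j ∈ Finset.univ.filter (fun j : Fin n => j ≠ j₀),
          Int.fract ((a : ℝ) * (((j : ℕ) : ℝ) - ((j₀ : ℕ) : ℝ)) / (n : ℝ))) +
        2 * Int.fract ((a : ℝ) * (s : ℝ) / (n : ℝ)) := by
  have : NeZero n := ⟨by omega⟩
  have ha : ¬ n ∣ a := Nat.not_dvd_of_pos_of_lt ha0 han
  have hproj := Fin.one_le_sum_fract_mul_div (k := ℝ) (by omega) ha
  have hsurf := Int.fract_mul_sign_div_pos (k := ℝ) ha (by omega) hs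
  rw [Fin.sum_fract_mul_sub_div_eq]
  linarith
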